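/- arXiv:2601.05731 — 8 statements merged into one kernel-verified Lean document; each statement's English description precedes it below -/
import Mathlib

section
/- (Lemma 3.1) If F(K) is nonempty, then for every w ∈ F(K) the sequence (‖s_n − w‖) is nonincreasing, i.e. ‖s_{n+1} − w‖ ≤ ‖s_n − w‖ for all n, and consequently lim_{n→∞} ‖s_n − w‖ exists. -/
/-- Lemma 3.1: If `F(K)` is nonempty, then for every `w ∈ F(K)` the
sequence `(‖s n − w‖)` is nonincreasing and hence `lim ‖s n − w‖` exists. -/
theorem stmt_1
    {Z : Type*} [NormedAddCommGroup Z] [NormedSpace ℝ Z] [CompleteSpace Z]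
    (W : Set Z) (hWne : W.Nonempty) (hWclosed : IsClosed W) (hWconvex : Convex ℝ W)
    (K : Z → Z) (hKmaps : Set.MapsTo K W W)
    (hKnonexp : ∀ x ∈ W, ∀ y ∈ W, ‖K x - K y‖ ≤ ‖x - y‖)
    (α β : ℕ → ℝ)
    (hα : ∀ n, α n ∈ Set.Ioo (0 : ℝ) 1) (hβ : ∀ n, β n ∈ Set.Ioo (0 : ℝ) 1)
    (s r : ℕ → Z) (hs0 : s 0 ∈ W)
    (hr : ∀ n, r n = (1 - β n) • s n + β n • K (s n))
    (hs : ∀ n, s (n + 1) = (1 - α n) • r n + α n • K (s n))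
    (hF : ∃ w ∈ W, K w = w) :
    ∀ w ∈ W, K w = w →
      (∀ n, ‖s (n + 1) - w‖ ≤ ‖s n - w‖) ∧
      ∃ l : ℝ, Filter.Tendsto (fun n => ‖s n - w‖) Filter.atTop (nhds l) := by
  intro w hwW hwfix
  -- s n ∈ W for all n
  have hsW : ∀ n, s n ∈ W := by
    intro n
    induction n with
    | zero => exact hs0
    | succ n ih =>
      have hK : K (s n) ∈ W := hKmaps ih
      have hrW : r n ∈ W := by
        rw [hr n]
        exact hWconvex ih hK (by linarith [(hβ n).2]) (le_of_lt (hβ n).1)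
          (by ring)
      rw [hs n]
      exact hWconvex hrW hK (by linarith [(hα n).2]) (le_of_lt (hα n).1) (by ring)
  have key : ∀ n, ‖s (n + 1) - w‖ ≤ ‖s n - w‖ := by
    intro n
    have hKs : ‖K (s n) - w‖ ≤ ‖s n - w‖ := by
      have := hKnonexp (s n) (hsW n) w hwW
      rwa [hwfix] at this
    have hrn : ‖r n - w‖ ≤ ‖s n - w‖ := by
      have heq : r n - w = (1 - β n) • (s n - w) + β n • (K (s n) - w) := by
        rw [hr n]; module
      calc ‖r n - w‖ ≤ (1 - β n) * ‖s n - w‖ + β n * ‖K (s n) - w‖ := by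
            rw [heq]
            refine (norm_add_le _ _).trans ?_
            rw [norm_smul, norm_smul, Real.norm_eq_abs, Real.norm_eq_abs,
              abs_of_nonneg (by linarith [(hβ n).2]), abs_of_nonneg (le_of_lt (hβ n).1)]
        _ ≤ (1 - β n) * ‖s n - w‖ + β n * ‖s n - w‖ := by
            have := (hβ n).1
            nlinarith
        _ = ‖s n - w‖ := by ring
    have heq : s (n + 1) - w = (1 - α n) • (r n - w) + α n • (K (s n) - w) := by
      rw [hs n]; module
    calc ‖s (n + 1) - w‖ ≤ (1 - α n) * ‖r n - w‖ + α n * ‖K (s n) - w‖ := by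
          rw [heq]
          refine (norm_add_le _ _).trans ?_
          rw [norm_smul, norm_smul, Real.norm_eq_abs, Real.norm_eq_abs,
            abs_of_nonneg (by linarith [(hα n).2]), abs_of_nonneg (le_of_lt (hα n).1)]
      _ ≤ (1 - α n) * ‖s n - w‖ + α n * ‖s n - w‖ := by
          have h1 := (hα n).1; have h2 := (hα n).2
          nlinarith
      _ = ‖s n - w‖ := by ring
  refine ⟨key, ?_⟩
  have hanti : Antitone (fun n => ‖s n - w‖) :=
    antitone_nat_of_succ_le key
  have hbdd : BddBelow (Set.range fun n => ‖s n - w‖) :=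
    ⟨0, by rintro x ⟨n, rfl⟩; exact norm_nonneg _⟩
  exact ⟨_, tendsto_atTop_ciInf hanti hbdd⟩
end

section
/- (Lemma 3.2, forward direction) Suppose Z is uniformly convex and there exist a, b with 0 < a ≤ b < 1 and a ≤ α_n ≤ b, a ≤ β_n ≤ b for all n. If F(K) is nonempty, then the sequence (s_n) is bounded and lim_{n→∞} ‖s_n − K s_n‖ = 0. -/
open Filter

lemma combo_lemma (Z : Type*) [NormedAddCommGroup Z] [NormedSpace ℝ Z]
    [UniformConvexSpace Z] {γ ε : ℝ} (hγ : 0 < γ) (hε : 0 < ε) :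
    ∃ δ, 0 < δ ∧ δ ≤ 1/2 ∧ ∀ x y : Z, ‖x‖ ≤ 1 → ‖y‖ ≤ 1 → ε ≤ ‖x - y‖ →
      ∀ t : ℝ, γ ≤ t → t ≤ 1 - γ → ‖t • x + (1 - t) • y‖ ≤ 1 - δ := by
  obtain ⟨δ₀, hδ₀, h⟩ := exists_forall_closed_ball_dist_add_le_two_sub Z hε
  refine ⟨min (1/2) (γ * δ₀ / 2), lt_min (by norm_num) (by positivity), min_le_left _ _,
    fun x y hx hy hxy t ht ht' => ?_⟩
  have hxy2 : ‖x + y‖ ≤ 2 - δ₀ := h hx hy hxy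
  have key : ∀ u : ℝ, γ ≤ u → u ≤ 1/2 → ∀ p q : Z, ‖p‖ ≤ 1 → ‖q‖ ≤ 1 →
      ‖p + q‖ ≤ 2 - δ₀ → ‖u • p + (1 - u) • q‖ ≤ 1 - γ * δ₀ / 2 := by
    intro u hu hu2 p q hp hq hpq
    have e : u • p + (1 - u) • q = u • (p + q) + (1 - 2*u) • q := by module
    rw [e]
    calc ‖u • (p + q) + (1 - 2*u) • q‖ ≤ ‖u • (p+q)‖ + ‖(1 - 2*u) • q‖ := norm_add_le _ _
      _ = u * ‖p+q‖ + (1 - 2*u) * ‖q‖ := by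
          rw [norm_smul, norm_smul, Real.norm_of_nonneg (by linarith),
            Real.norm_of_nonneg (by linarith)]
      _ ≤ u * (2 - δ₀) + (1 - 2*u) * 1 := by gcongr <;> linarith
      _ ≤ 1 - γ * δ₀ / 2 := by nlinarith
  rcases le_or_gt t (1/2) with h2 | h2
  · have := key t ht h2 x y hx hy hxy2
    have hm := min_le_right (1/2 : ℝ) (γ*δ₀/2)
    linarith
  · have h1t : (1:ℝ) - t ≤ 1/2 := by linarith
    have hγ1t : γ ≤ 1 - t := by linarith
    have := key (1-t) hγ1t h1t y x hy hx (by rwa [add_comm])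
    have e : (1-t) • y + (1 - (1-t)) • x = t • x + (1-t) • y := by module
    rw [e] at this
    have hm := min_le_right (1/2 : ℝ) (γ*δ₀/2)
    linarith

/-- Lemma 3.2, forward direction: in a uniformly convex Banach space,
with `a ≤ α n ≤ b`, `a ≤ β n ≤ b`, `0 < a ≤ b < 1`, if `F(K)` is nonempty then `(s n)`
is bounded and `‖s n − K (s n)‖ → 0`. -/
theorem stmt_2
    {Z : Type*} [NormedAddCommGroup Z] [NormedSpace ℝ Z] [CompleteSpace Z]
    [UniformConvexSpace Z]
    (W : Set Z) (hWne : W.Nonempty) (hWclosed : IsClosed W) (hWconvex : Convex ℝ W)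
    (K : Z → Z) (hKmaps : Set.MapsTo K W W)
    (hKnonexp : ∀ x ∈ W, ∀ y ∈ W, ‖K x - K y‖ ≤ ‖x - y‖)
    (α β : ℕ → ℝ)
    (a b : ℝ) (ha : 0 < a) (hab : a ≤ b) (hb : b < 1)
    (hα : ∀ n, a ≤ α n ∧ α n ≤ b) (hβ : ∀ n, a ≤ β n ∧ β n ≤ b)
    (s r : ℕ → Z) (hs0 : s 0 ∈ W)
    (hr : ∀ n, r n = (1 - β n) • s n + β n • K (s n))
    (hs : ∀ n, s (n + 1) = (1 - α n) • r n + α n • K (s n))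
    (hF : ∃ w ∈ W, K w = w) :
    Bornology.IsBounded (Set.range s) ∧
      Filter.Tendsto (fun n => ‖s n - K (s n)‖) Filter.atTop (nhds 0) := by
  obtain ⟨w, hwW, hw⟩ := hF
  have hsW : ∀ n, s n ∈ W := by
    intro n
    induction n with
    | zero => exact hs0
    | succ n ih =>
      have hK : K (s n) ∈ W := hKmaps ih
      have hβ1 := (hβ n).1; have hβ2 := (hβ n).2
      have hα1 := (hα n).1; have hα2 := (hα n).2
      have hrW : r n ∈ W := by
        rw [hr n]
        exact hWconvex ih hK (by linarith) (by linarith) (by ring)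
      rw [hs n]
      exact hWconvex hrW hK (by linarith) (by linarith) (by ring)
  have hKd : ∀ n, ‖K (s n) - w‖ ≤ ‖s n - w‖ := by
    intro n
    have := hKnonexp (s n) (hsW n) w hwW
    rwa [hw] at this
  have hrle : ∀ n, ‖r n - w‖ ≤ ‖s n - w‖ := by
    intro n
    have hβ1 := (hβ n).1; have hβ2 := (hβ n).2
    have e : r n - w = (1 - β n) • (s n - w) + β n • (K (s n) - w) := by
      rw [hr n]; module
    rw [e]
    have h1 : ‖(1 - β n) • (s n - w) + β n • (K (s n) - w)‖
        ≤ (1 - β n) * ‖s n - w‖ + β n * ‖K (s n) - w‖ := by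
      refine (norm_add_le _ _).trans ?_
      rw [norm_smul, norm_smul, Real.norm_of_nonneg (by linarith),
        Real.norm_of_nonneg (by linarith)]
    have h2 := mul_le_mul_of_nonneg_left (hKd n) (by linarith : (0:ℝ) ≤ β n)
    linarith
  have hkey : ∀ n, ‖s (n+1) - w‖ ≤ (1 - α n) * ‖r n - w‖ + α n * ‖s n - w‖ := by
    intro n
    have hα1 := (hα n).1; have hα2 := (hα n).2
    have e : s (n+1) - w = (1 - α n) • (r n - w) + α n • (K (s n) - w) := by
      rw [hs n]; module
    rw [e]
    have h1 : ‖(1 - α n) • (r n - w) + α n • (K (s n) - w)‖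
        ≤ (1 - α n) * ‖r n - w‖ + α n * ‖K (s n) - w‖ := by
      refine (norm_add_le _ _).trans ?_
      rw [norm_smul, norm_smul, Real.norm_of_nonneg (by linarith),
        Real.norm_of_nonneg (by linarith)]
    have h2 := mul_le_mul_of_nonneg_left (hKd n) (by linarith : (0:ℝ) ≤ α n)
    linarith
  have hdec : ∀ n, ‖s (n+1) - w‖ ≤ ‖s n - w‖ := by
    intro n
    have hα1 := (hα n).1; have hα2 := (hα n).2
    have h2 := mul_le_mul_of_nonneg_left (hrle n) (by linarith : (0:ℝ) ≤ 1 - α n)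
    have := hkey n
    linarith
  have hanti : Antitone (fun n => ‖s n - w‖) := antitone_nat_of_succ_le hdec
  have hbddb : BddBelow (Set.range fun n => ‖s n - w‖) :=
    ⟨0, by rintro _ ⟨n, rfl⟩; exact norm_nonneg _⟩
  set c := ⨅ n, ‖s n - w‖ with hc_def
  have hdc : Tendsto (fun n => ‖s n - w‖) atTop (nhds c) := tendsto_atTop_ciInf hanti hbddb
  have hcle : ∀ n, c ≤ ‖s n - w‖ := fun n => ciInf_le hbddb n
  have hc0 : 0 ≤ c := le_ciInf fun n => norm_nonneg _
  have hbound : Bornology.IsBounded (Set.range s) := by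
    apply (Metric.isBounded_closedBall (x := w) (r := ‖s 0 - w‖)).subset
    rintro _ ⟨n, rfl⟩
    simp only [Metric.mem_closedBall, dist_eq_norm]
    exact hanti (Nat.zero_le n)
  have hb1 : (0:ℝ) < 1 - b := by linarith
  have hrlow : ∀ n, c - (b/(1-b)) * (‖s n - w‖ - c) ≤ ‖r n - w‖ := by
    intro n
    have h1 := hkey n
    have h2 := hcle (n+1)
    have hα1 := (hα n).1; have hα2 := (hα n).2
    have hdn := hcle n
    have hnr : (0:ℝ) ≤ ‖r n - w‖ := norm_nonneg _
    rcases le_or_gt c ‖r n - w‖ with h | h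
    · have : (0:ℝ) ≤ (b/(1-b)) * (‖s n - w‖ - c) :=
        mul_nonneg (div_nonneg (by linarith) (by linarith)) (by linarith)
      linarith
    · rw [sub_le_iff_le_add, ← sub_le_iff_le_add', div_mul_eq_mul_div, le_div_iff₀ hb1]
      nlinarith [mul_le_mul_of_nonneg_right hα2 (sub_pos.mpr h).le,
        mul_le_mul_of_nonneg_left (sub_pos.mpr h).le (by linarith : (0:ℝ) ≤ 1 - α n)]
  have hrt : Tendsto (fun n => ‖r n - w‖) atTop (nhds c) := by
    have h1 : Tendsto (fun n => ‖s n - w‖ - c) atTop (nhds 0) := by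
      simpa using hdc.sub (tendsto_const_nhds (x := c))
    have h2 : Tendsto (fun n => (b/(1-b)) * (‖s n - w‖ - c)) atTop (nhds 0) := by
      simpa using h1.const_mul (b/(1-b))
    have hlow : Tendsto (fun n => c - (b/(1-b)) * (‖s n - w‖ - c)) atTop (nhds c) := by
      simpa using (tendsto_const_nhds (x := c)).sub h2
    exact tendsto_of_tendsto_of_tendsto_of_le_of_le hlow hdc hrlow hrle
  refine ⟨hbound, ?_⟩
  rcases eq_or_lt_of_le hc0 with hc | hc
  · have h2d : Tendsto (fun n => 2 * ‖s n - w‖) atTop (nhds 0) := by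
      rw [← hc] at hdc
      simpa using hdc.const_mul 2
    apply squeeze_zero (fun n => norm_nonneg _) (fun n => ?_) h2d
    calc ‖s n - K (s n)‖ = ‖(s n - w) - (K (s n) - w)‖ := by rw [sub_sub_sub_cancel_right]
      _ ≤ ‖s n - w‖ + ‖K (s n) - w‖ := norm_sub_le _ _
      _ ≤ ‖s n - w‖ + ‖s n - w‖ := by gcongr; exact hKd n
      _ = 2 * ‖s n - w‖ := by ring
  · rw [Metric.tendsto_atTop]
    intro ε hε
    have hγ : (0:ℝ) < min a (1-b) := lt_min ha hb1
    have hd0 : 0 < ‖s 0 - w‖ := lt_of_lt_of_le hc (hcle 0)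
    obtain ⟨δ, hδ, hδhalf, hcombo⟩ := combo_lemma Z hγ (div_pos hε hd0)
    have hδ1 : (0:ℝ) < 1 - δ := by linarith
    have hev1 : ∀ᶠ n in atTop, c * (1 - δ/2) < ‖r n - w‖ :=
      hrt.eventually (eventually_gt_nhds (by nlinarith))
    have hev2 : ∀ᶠ n in atTop, ‖s n - w‖ < c * (1 - δ/2) / (1 - δ) :=
      hdc.eventually (eventually_lt_nhds (by rw [lt_div_iff₀ hδ1]; nlinarith))
    obtain ⟨N, hN⟩ := eventually_atTop.1 (hev1.and hev2)
    refine ⟨N, fun n hn => ?_⟩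
    obtain ⟨hN1, hN2⟩ := hN n hn
    rw [Real.dist_eq, sub_zero, abs_of_nonneg (norm_nonneg _)]
    by_contra hcon
    push_neg at hcon
    have hD : 0 < ‖s n - w‖ := lt_of_lt_of_le hc (hcle n)
    set D := ‖s n - w‖ with hD_def
    set x := D⁻¹ • (s n - w) with hx_def
    set y := D⁻¹ • (K (s n) - w) with hy_def
    have hinv : (0:ℝ) ≤ D⁻¹ := inv_nonneg.2 hD.le
    have hDx : D • x = s n - w := by
      rw [hx_def, smul_smul, mul_inv_cancel₀ hD.ne', one_smul]
    have hDy : D • y = K (s n) - w := by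
      rw [hy_def, smul_smul, mul_inv_cancel₀ hD.ne', one_smul]
    have hx : ‖x‖ ≤ 1 := by
      rw [hx_def, norm_smul, Real.norm_of_nonneg hinv, ← hD_def,
        inv_mul_cancel₀ hD.ne']
    have hy : ‖y‖ ≤ 1 := by
      rw [hy_def, norm_smul, Real.norm_of_nonneg hinv]
      calc D⁻¹ * ‖K (s n) - w‖ ≤ D⁻¹ * D := by gcongr; exact hKd n
        _ = 1 := inv_mul_cancel₀ hD.ne'
    have hxy : ε / ‖s 0 - w‖ ≤ ‖x - y‖ := by
      have e : x - y = D⁻¹ • (s n - K (s n)) := by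
        rw [hx_def, hy_def, ← smul_sub, sub_sub_sub_cancel_right]
      rw [e, norm_smul, Real.norm_of_nonneg hinv]
      have hDle : D ≤ ‖s 0 - w‖ := hanti (Nat.zero_le n)
      calc ε / ‖s 0 - w‖ ≤ ε / D := by gcongr
        _ ≤ ‖s n - K (s n)‖ / D := by gcongr
        _ = D⁻¹ * ‖s n - K (s n)‖ := by rw [div_eq_inv_mul]
    have hβ1 := (hβ n).1; have hβ2 := (hβ n).2
    have ht : min a (1-b) ≤ 1 - β n := (min_le_right _ _).trans (by linarith)
    have ht' : 1 - β n ≤ 1 - min a (1-b) := by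
      have := min_le_left a (1-b); linarith
    have hcres := hcombo x y hx hy hxy (1 - β n) ht ht'
    have hrweq : r n - w = D • ((1 - β n) • x + (1 - (1 - β n)) • y) := by
      have e : r n - w = (1 - β n) • (s n - w) + β n • (K (s n) - w) := by
        rw [hr n]; module
      rw [e, ← hDx, ← hDy]
      module
    have hnorm : ‖r n - w‖ ≤ D * (1 - δ) := by
      rw [hrweq, norm_smul, Real.norm_of_nonneg hD.le]
      exact mul_le_mul_of_nonneg_left hcres hD.le
    have hfin : D * (1 - δ) < c * (1 - δ/2) := by
      have := (lt_div_iff₀ hδ1).1 hN2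
      linarith
    linarith
end

section
/- (Lemma 3.2, reverse direction) Suppose Z is uniformly convex and there exist a, b with 0 < a ≤ b < 1 and a ≤ α_n ≤ b, a ≤ β_n ≤ b for all n. If the sequence (s_n) is bounded and lim_{n→∞} ‖s_n − K s_n‖ = 0, then F(K) is nonempty. -/
open Filter

/-- Scaled uniform convexity estimate for balls of radius between `d` and `d+1`. -/
lemma ucx_aux {Z : Type*} [NormedAddCommGroup Z] [NormedSpace ℝ Z] [UniformConvexSpace Z]
    {d ε : ℝ} (hd : 0 < d) (hε : 0 < ε) :
    ∃ c > 0, ∀ (R : ℝ) (u v : Z), d ≤ R → R ≤ d + 1 → ‖u‖ ≤ R → ‖v‖ ≤ R →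
      ε ≤ ‖u - v‖ → ‖u + v‖ ≤ 2 * R - c := by
  obtain ⟨δ, hδ, h⟩ := exists_forall_closed_ball_dist_add_le_two_mul_sub Z hε (d + 1)
  refine ⟨δ * d / (d + 1), by positivity, fun R u v hdR hR1 hu hv huv => ?_⟩
  have hR : 0 < R := hd.trans_le hdR
  set lam : ℝ := (d + 1) / R with hlam_def
  have hlam1 : 1 ≤ lam := (one_le_div hR).2 hR1
  have hlam0 : 0 < lam := by positivity
  have h1 : ‖lam • u‖ ≤ d + 1 := by
    rw [norm_smul, Real.norm_eq_abs, abs_of_pos hlam0]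
    calc lam * ‖u‖ ≤ lam * R := by gcongr
    _ = d + 1 := div_mul_cancel₀ _ hR.ne'
  have h2 : ‖lam • v‖ ≤ d + 1 := by
    rw [norm_smul, Real.norm_eq_abs, abs_of_pos hlam0]
    calc lam * ‖v‖ ≤ lam * R := by gcongr
    _ = d + 1 := div_mul_cancel₀ _ hR.ne'
  have h3 : ε ≤ ‖lam • u - lam • v‖ := by
    rw [← smul_sub, norm_smul, Real.norm_eq_abs, abs_of_pos hlam0]
    calc ε ≤ ‖u - v‖ := huv
    _ = 1 * ‖u - v‖ := (one_mul _).symm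
    _ ≤ lam * ‖u - v‖ := by gcongr
  have key := h h1 h2 h3
  rw [← smul_add, norm_smul, Real.norm_eq_abs, abs_of_pos hlam0] at key
  rw [hlam_def, div_mul_eq_mul_div, div_le_iff₀ hR] at key
  have hd1 : (0:ℝ) < d + 1 := by positivity
  have h5 : δ * d / (d + 1) * (d + 1) = δ * d := div_mul_cancel₀ _ hd1.ne'
  nlinarith [key, h5, hdR, hδ, norm_nonneg (u + v)]

/-- Lemma 3.2, reverse direction: in a uniformly convex Banach space,
with `a ≤ α n ≤ b`, `a ≤ β n ≤ b`, `0 < a ≤ b < 1`, if `(s n)` is bounded and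
`‖s n − K (s n)‖ → 0`, then `F(K)` is nonempty. -/
theorem stmt_3
    {Z : Type*} [NormedAddCommGroup Z] [NormedSpace ℝ Z] [CompleteSpace Z]
    [UniformConvexSpace Z]
    (W : Set Z) (hWne : W.Nonempty) (hWclosed : IsClosed W) (hWconvex : Convex ℝ W)
    (K : Z → Z) (hKmaps : Set.MapsTo K W W)
    (hKnonexp : ∀ x ∈ W, ∀ y ∈ W, ‖K x - K y‖ ≤ ‖x - y‖)
    (α β : ℕ → ℝ)
    (a b : ℝ) (ha : 0 < a) (hab : a ≤ b) (hb : b < 1)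
    (hα : ∀ n, a ≤ α n ∧ α n ≤ b) (hβ : ∀ n, a ≤ β n ∧ β n ≤ b)
    (s r : ℕ → Z) (hs0 : s 0 ∈ W)
    (hr : ∀ n, r n = (1 - β n) • s n + β n • K (s n))
    (hs : ∀ n, s (n + 1) = (1 - α n) • r n + α n • K (s n))
    (hbdd : Bornology.IsBounded (Set.range s))
    (hafps : Filter.Tendsto (fun n => ‖s n - K (s n)‖) Filter.atTop (nhds 0)) :
    ∃ w ∈ W, K w = w := by
  obtain ⟨M, hM⟩ := isBounded_iff_forall_norm_le.1 hbdd
  have hMn : ∀ n, ‖s n‖ ≤ M := fun n => hM _ (Set.mem_range_self n)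
  -- the iterates stay in W
  have hsW : ∀ n, s n ∈ W := by
    intro n
    induction n with
    | zero => exact hs0
    | succ n ih =>
      have hK : K (s n) ∈ W := hKmaps ih
      have hrW : r n ∈ W := by
        rw [hr n]
        exact hWconvex ih hK (by linarith [(hβ n).2]) (by linarith [(hβ n).1]) (by ring)
      rw [hs n]
      exact hWconvex hrW hK (by linarith [(hα n).2]) (by linarith [(hα n).1]) (by ring)
  -- the asymptotic radius function
  set φ : Z → ℝ := fun x => limsup (fun n => ‖s n - x‖) atTop with hφ_def
  have hBdd : ∀ x : Z, IsBoundedUnder (· ≤ ·) atTop (fun n => ‖s n - x‖) := by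
    intro x
    exact isBoundedUnder_of ⟨M + ‖x‖, fun n => (norm_sub_le _ _).trans (by gcongr; exact hMn n)⟩
  have hCo : ∀ x : Z, IsCoboundedUnder (· ≤ ·) atTop (fun n => ‖s n - x‖) := fun x =>
    isCoboundedUnder_le_of_eventually_le atTop (x := 0)
      (Eventually.of_forall fun n => norm_nonneg _)
  have hL2 : ∀ (x : Z) (c : ℝ), (∀ᶠ n in atTop, ‖s n - x‖ ≤ c) → φ x ≤ c := fun x c h =>
    limsup_le_of_le (hCo x) h
  have hL1 : ∀ x : Z, ∀ ε : ℝ, 0 < ε → ∀ᶠ n in atTop, ‖s n - x‖ ≤ φ x + ε := by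
    intro x ε hε
    have h := eventually_lt_of_limsup_lt
      (lt_add_of_pos_right (φ x) hε : limsup (fun n => ‖s n - x‖) atTop < φ x + ε) (hBdd x)
    exact h.mono fun n hn => hn.le
  have hφ0 : ∀ x : Z, 0 ≤ φ x := fun x =>
    le_limsup_of_frequently_le (Frequently.of_forall fun n => norm_nonneg _) (hBdd x)
  have hL3 : ∀ p q : Z, φ p ≤ φ q + ‖q - p‖ := by
    intro p q
    refine le_of_forall_pos_le_add fun ε hε => ?_
    refine hL2 p _ ((hL1 q ε hε).mono fun n hn => ?_)
    have ht : ‖s n - p‖ ≤ ‖s n - q‖ + ‖q - p‖ := by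
      have : s n - p = (s n - q) + (q - p) := by abel
      rw [this]; exact norm_add_le _ _
    linarith
  -- the asymptotic radius of W
  have hne : (φ '' W).Nonempty := hWne.image φ
  have hbdl : BddBelow (φ '' W) := ⟨0, by rintro y ⟨x, -, rfl⟩; exact hφ0 x⟩
  set d := sInf (φ '' W) with hd_def
  have hd0 : 0 ≤ d := le_csInf hne (by rintro y ⟨x, -, rfl⟩; exact hφ0 x)
  have hdle : ∀ x ∈ W, d ≤ φ x := fun x hx => csInf_le hbdl ⟨x, hx, rfl⟩
  -- the uniform convexity contradiction machine
  have contra : 0 < d → ∀ ε : ℝ, 0 < ε → ∃ η > 0, ∀ p q : Z, p ∈ W → q ∈ W →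
      φ p ≤ d + η → φ q ≤ d + η → ‖p - q‖ < ε := by
    intro hd ε hε
    obtain ⟨c, hc, hcx⟩ := ucx_aux (Z := Z) hd hε
    refine ⟨min (c/8) (1/4), by positivity, fun p q hpW hqW hφp hφq => ?_⟩
    by_contra hge
    push_neg at hge
    set η := min (c/8) (1/4) with hη_def
    have hη8 : η ≤ c/8 := min_le_left _ _
    have hη4 : η ≤ 1/4 := min_le_right _ _
    have hη0 : 0 < η := by positivity
    set m := (1/2 : ℝ) • p + (1/2 : ℝ) • q with hm
    have hmW : m ∈ W := hWconvex hpW hqW (by norm_num) (by norm_num) (by norm_num)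
    have hev : ∀ᶠ n in atTop, ‖s n - m‖ ≤ d + 2*η - c/2 := by
      filter_upwards [hL1 p η hη0, hL1 q η hη0] with n h1 h2
      have hu : ‖s n - p‖ ≤ d + 2*η := by linarith
      have hv : ‖s n - q‖ ≤ d + 2*η := by linarith
      have hsub : ε ≤ ‖(s n - p) - (s n - q)‖ := by
        rw [show (s n - p) - (s n - q) = -(p - q) by abel, norm_neg]; exact hge
      have hadd := hcx (d + 2*η) (s n - p) (s n - q) (by linarith) (by linarith) hu hv hsub
      have h2sm : (s n - p) + (s n - q) = (2:ℝ) • (s n - m) := by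
        rw [hm]; module
      rw [h2sm, norm_smul, Real.norm_ofNat] at hadd
      linarith
    have hφm : φ m ≤ d + 2*η - c/2 := hL2 m _ hev
    have hdm := hdle m hmW
    linarith
  -- a minimizing sequence
  have hmin : ∀ k : ℕ, ∃ x, x ∈ W ∧ φ x < d + 1/(k+1) := by
    intro k
    obtain ⟨y, ⟨x, hxW, rfl⟩, hy⟩ := exists_lt_of_csInf_lt hne
      (lt_add_of_pos_right d (show (0:ℝ) < 1/(k+1) by positivity))
    exact ⟨x, hxW, hy⟩
  choose x hxW hxφ using hmin
  have hsmall : ∀ η : ℝ, 0 < η → ∃ N : ℕ, ∀ j : ℕ, N ≤ j → (1:ℝ)/(j+1) < η := by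
    intro η hη
    obtain ⟨N, hN⟩ := exists_nat_gt (1/η)
    refine ⟨N, fun j hj => ?_⟩
    have h1 : (1:ℝ)/η < (j:ℝ) + 1 := by
      calc (1:ℝ)/η < N := hN
      _ ≤ (j:ℝ) := by exact_mod_cast hj
      _ ≤ (j:ℝ) + 1 := by linarith
    rw [div_lt_iff₀ hη] at h1
    rw [div_lt_iff₀ (by positivity : (0:ℝ) < (j:ℝ)+1)]
    linarith
  -- the minimizing sequence is Cauchy
  have hcauchy : CauchySeq x := by
    rw [Metric.cauchySeq_iff]
    intro ε hε
    rcases eq_or_lt_of_le hd0 with hdz | hdz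
    · -- d = 0
      obtain ⟨N, hN⟩ := hsmall (ε/4) (by positivity)
      refine ⟨N, fun j hj k hk => ?_⟩
      have hj' : φ (x j) < ε/4 := by
        have := hxφ j; have := hN j hj; linarith [hdz.symm.le]
      have hk' : φ (x k) < ε/4 := by
        have := hxφ k; have := hN k hk; linarith [hdz.symm.le]
      obtain ⟨n, h1, h2⟩ :=
        ((hL1 (x j) (ε/8) (by positivity)).and (hL1 (x k) (ε/8) (by positivity))).exists
      rw [dist_eq_norm]
      have ht : ‖x j - x k‖ ≤ ‖s n - x j‖ + ‖s n - x k‖ := by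
        have : x j - x k = -(s n - x j) + (s n - x k) := by abel
        rw [this]
        exact (norm_add_le _ _).trans (by rw [norm_neg])
      linarith
    · -- d > 0
      obtain ⟨η, hη, hcon⟩ := contra hdz ε hε
      obtain ⟨N, hN⟩ := hsmall η hη
      refine ⟨N, fun j hj k hk => ?_⟩
      rw [dist_eq_norm]
      exact hcon (x j) (x k) (hxW j) (hxW k)
        (by linarith [hxφ j, hN j hj]) (by linarith [hxφ k, hN k hk])
  obtain ⟨w, hw⟩ := cauchySeq_tendsto_of_complete hcauchy
  have hwW : w ∈ W := hWclosed.mem_of_tendsto hw (Eventually.of_forall hxW)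
  -- φ w ≤ d
  have hφw : φ w ≤ d := by
    refine le_of_forall_pos_le_add fun ε hε => ?_
    obtain ⟨N1, hN1⟩ := hsmall (ε/2) (by positivity)
    obtain ⟨N2, hN2⟩ := Metric.tendsto_atTop.1 hw (ε/2) (by positivity)
    set k := max N1 N2
    have h1 : φ w ≤ φ (x k) + ‖x k - w‖ := hL3 w (x k)
    have h2 : φ (x k) < d + ε/2 := by
      have := hxφ k; have := hN1 k (le_max_left _ _); linarith
    have h3 : ‖x k - w‖ < ε/2 := by
      have := hN2 k (le_max_right _ _); rwa [dist_eq_norm] at this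
    linarith
  have hKwW : K w ∈ W := hKmaps hwW
  -- φ (K w) ≤ d
  have hφKw : φ (K w) ≤ d := by
    refine le_of_forall_pos_le_add fun ε hε => ?_
    have h2 : ∀ᶠ n in atTop, ‖s n - K (s n)‖ < ε/2 :=
      hafps.eventually_lt_const (by positivity)
    refine hL2 _ _ ?_
    filter_upwards [hL1 w (ε/2) (by positivity), h2] with n ha' hb'
    have hnon := hKnonexp (s n) (hsW n) w hwW
    have ht : ‖s n - K w‖ ≤ ‖s n - K (s n)‖ + ‖K (s n) - K w‖ := by
      have : s n - K w = (s n - K (s n)) + (K (s n) - K w) := by abel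
      rw [this]; exact norm_add_le _ _
    linarith
  -- conclude
  refine ⟨w, hwW, ?_⟩
  rcases eq_or_lt_of_le hd0 with hdz | hdz
  · -- d = 0 : s n → w and hence K w = w
    have hKw : ∀ ε : ℝ, 0 < ε → ‖K w - w‖ < ε := by
      intro ε hε
      obtain ⟨n, h1, h2⟩ :=
        ((hL1 w (ε/8) (by positivity)).and
          (hafps.eventually_lt_const (show (0:ℝ) < ε/4 by positivity))).exists
      have hφw0 : φ w ≤ 0 := by linarith [hdz.symm.le]
      have hnon := hKnonexp w hwW (s n) (hsW n)
      have ht : ‖K w - w‖ ≤ ‖K w - K (s n)‖ + ‖K (s n) - s n‖ + ‖s n - w‖ := by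
        have : K w - w = (K w - K (s n)) + (K (s n) - s n) + (s n - w) := by abel
        rw [this]; exact norm_add₃_le
      have hr1 : ‖K (s n) - s n‖ = ‖s n - K (s n)‖ := norm_sub_rev _ _
      have hr2 : ‖w - s n‖ = ‖s n - w‖ := norm_sub_rev _ _
      linarith
    have h0 : ‖K w - w‖ ≤ 0 := le_of_forall_pos_le_add fun ε hε => by
      linarith [hKw ε hε]
    rw [← sub_eq_zero]
    exact norm_le_zero_iff.1 h0
  · -- d > 0 : uniform convexity forces K w = w
    by_contra hne'
    have hεpos : 0 < ‖w - K w‖ := by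
      rw [norm_pos_iff, sub_ne_zero]
      exact fun h => hne' h.symm
    obtain ⟨η, hη, hcon⟩ := contra hdz _ hεpos
    exact lt_irrefl _ (hcon w (K w) hwW hKwW (by linarith) (by linarith))
end

section
/- Suppose Z is uniformly convex, there exist a, b with 0 < a ≤ b < 1 and a ≤ α_n ≤ b, a ≤ β_n ≤ b for all n, and F(K) is nonempty. Then lim_{n→∞} ‖r_n − K s_n‖ = 0. -/
/-!
With `w` a fixed point, `x n = s n - w` and `y n = K (s n) - w` satisfy `‖y n‖ ≤ ‖x n‖` and
`x (n + 1) = t n • x n + (1 - t n) • y n` with `t n = (1 - α n) (1 - β n)` bounded away from `0`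
and `1`. Hence `‖x n‖` decreases and converges, so its decrements tend to `0`; by uniform convexity
a gap `‖x n - y n‖ ≥ ε` would force a decrement of at least a fixed `δ > 0`. Thus
`‖s n - K (s n)‖ → 0`, and `‖r n - K (s n)‖ = (1 - β n) ‖s n - K (s n)‖`.
-/

open Filter Topology

section UniformConvex

variable {E : Type*} [NormedAddCommGroup E] [NormedSpace ℝ E] [UniformConvexSpace E]

theorem exists_forall_norm_add_le_two_mul_norm_sub {ε : ℝ} (hε : 0 < ε) (R : ℝ) :
    ∃ δ > 0, ∀ ⦃x y : E⦄, ‖x‖ ≤ R → ‖y‖ ≤ ‖x‖ → ε ≤ ‖x - y‖ → ‖x + y‖ ≤ 2 * ‖x‖ - δ := by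
  obtain hR | hR := le_or_gt R 0
  · exact ⟨1, one_pos, fun x y hx hy hxy =>
      absurd (hxy.trans (norm_sub_le x y)) (by linarith [norm_nonneg y])⟩
  obtain ⟨δ, hδ, h⟩ := exists_forall_closed_ball_dist_add_le_two_sub E (div_pos hε hR)
  -- rescale to the unit ball; `δ` stays uniform because `ε ≤ ‖x - y‖ ≤ 2 ‖x‖`
  refine ⟨ε / 2 * δ, by positivity, fun x y hx hy hxy => ?_⟩
  have hxε : ε ≤ 2 * ‖x‖ := by linarith [norm_sub_le x y]
  have hx0 : 0 < ‖x‖ := by linarith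
  have hscale : ∀ z : E, ‖‖x‖⁻¹ • z‖ = ‖z‖ / ‖x‖ := fun z => by
    rw [norm_smul_of_nonneg (inv_nonneg.2 hx0.le), inv_mul_eq_div]
  have hunit := h (x := ‖x‖⁻¹ • x) (y := ‖x‖⁻¹ • y)
    (by rw [hscale, div_self hx0.ne']) (by rw [hscale, div_le_one hx0]; exact hy)
    (by
      rw [← smul_sub, hscale]
      exact (div_le_div_of_nonneg_left hε.le hx0 hx).trans (div_le_div_of_nonneg_right hxy hx0.le))
  rw [← smul_add, hscale, div_le_iff₀ hx0] at hunit
  nlinarith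

theorem exists_forall_norm_combo_le_norm_sub {ε c : ℝ} (hε : 0 < ε) (hc : 0 < c) (R : ℝ) :
    ∃ δ > 0, ∀ ⦃x y : E⦄, ‖x‖ ≤ R → ‖y‖ ≤ ‖x‖ → ε ≤ ‖x - y‖ →
      ∀ ⦃t : ℝ⦄, c ≤ t → c ≤ 1 - t → ‖t • x + (1 - t) • y‖ ≤ ‖x‖ - δ := by
  obtain ⟨δ, hδ, h⟩ := exists_forall_norm_add_le_two_mul_norm_sub (E := E) hε R
  refine ⟨c * δ, mul_pos hc hδ, fun x y hx hy hxy t hct hct' => ?_⟩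
  have hmid := h hx hy hxy
  -- split off `2 min t (1 - t)` times the midpoint; the rest is a multiple of `x` or of `y`
  rcases le_total t (1 / 2) with ht | ht
  · calc ‖t • x + (1 - t) • y‖ = ‖t • (x + y) + (1 - 2 * t) • y‖ := by congr 1; module
      _ ≤ t * ‖x + y‖ + (1 - 2 * t) * ‖y‖ := by
        refine (norm_add_le _ _).trans_eq ?_
        rw [norm_smul_of_nonneg (by linarith), norm_smul_of_nonneg (by linarith)]
      _ ≤ ‖x‖ - c * δ := by nlinarith
  · calc ‖t • x + (1 - t) • y‖ = ‖(1 - t) • (x + y) + (2 * t - 1) • x‖ := by congr 1; module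
      _ ≤ (1 - t) * ‖x + y‖ + (2 * t - 1) * ‖x‖ := by
        refine (norm_add_le _ _).trans_eq ?_
        rw [norm_smul_of_nonneg (by linarith), norm_smul_of_nonneg (by linarith)]
      _ ≤ ‖x‖ - c * δ := by nlinarith

theorem tendsto_norm_sub_of_eq_combo {x y : ℕ → E} {t : ℕ → ℝ} {c : ℝ} (hc : 0 < c)
    (ht : ∀ n, c ≤ t n ∧ c ≤ 1 - t n) (hy : ∀ n, ‖y n‖ ≤ ‖x n‖)
    (hx : ∀ n, x (n + 1) = t n • x n + (1 - t n) • y n) :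
    Tendsto (fun n => ‖x n - y n‖) atTop (𝓝 0) := by
  have hstep : ∀ n, ‖x (n + 1)‖ ≤ ‖x n‖ := fun n => by
    have := convex_closedBall (0 : E) ‖x n‖ (mem_closedBall_zero_iff.2 le_rfl)
      (mem_closedBall_zero_iff.2 (hy n)) (by linarith [ht n] : 0 ≤ t n)
      (by linarith [ht n] : 0 ≤ 1 - t n) (by ring)
    rwa [mem_closedBall_zero_iff, ← hx] at this
  have hanti : Antitone (fun n => ‖x n‖) := antitone_nat_of_succ_le hstep
  have hlim := tendsto_atTop_ciInf hanti ⟨0, by rintro _ ⟨n, rfl⟩; exact norm_nonneg _⟩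
  have hdecr : Tendsto (fun n => ‖x n‖ - ‖x (n + 1)‖) atTop (𝓝 0) := by
    simpa using hlim.sub (hlim.comp (tendsto_add_atTop_nat 1))
  rw [Metric.tendsto_nhds]
  intro ε hε
  obtain ⟨δ, hδ, hcombo⟩ := exists_forall_norm_combo_le_norm_sub (E := E) hε hc ‖x 0‖
  filter_upwards [hdecr.eventually (gt_mem_nhds hδ)] with n hn
  rw [Real.dist_0_eq_abs, abs_of_nonneg (norm_nonneg _)]
  by_contra! hεn
  have := hcombo (hanti n.zero_le) (hy n) hεn (ht n).1 (ht n).2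
  rw [← hx] at this
  linarith

end UniformConvex

theorem min_le_one_sub_mul_one_sub {a b α β : ℝ} (ha : 0 < a) (hb : b < 1)
    (hα : a ≤ α ∧ α ≤ b) (hβ : a ≤ β ∧ β ≤ b) :
    min a ((1 - b) ^ 2) ≤ (1 - α) * (1 - β) ∧ min a ((1 - b) ^ 2) ≤ 1 - (1 - α) * (1 - β) := by
  obtain ⟨haα, hαb⟩ := hα
  obtain ⟨haβ, hβb⟩ := hβ
  constructor
  · refine (min_le_right _ _).trans ?_
    rw [sq]
    exact mul_le_mul (by linarith) (by linarith) (by linarith) (by linarith)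
  · refine (min_le_left _ _).trans ?_
    nlinarith

theorem stmt_4_general
    {Z : Type*} [NormedAddCommGroup Z] [NormedSpace ℝ Z]
    [UniformConvexSpace Z]
    (W : Set Z) (hWconvex : Convex ℝ W)
    (K : Z → Z) (hKmaps : Set.MapsTo K W W)
    (hKnonexp : ∀ x ∈ W, ∀ y ∈ W, ‖K x - K y‖ ≤ ‖x - y‖)
    (α β : ℕ → ℝ)
    (a b : ℝ) (ha : 0 < a) (hb : b < 1)
    (hα : ∀ n, a ≤ α n ∧ α n ≤ b) (hβ : ∀ n, a ≤ β n ∧ β n ≤ b)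
    (s r : ℕ → Z) (hs0 : s 0 ∈ W)
    (hr : ∀ n, r n = (1 - β n) • s n + β n • K (s n))
    (hs : ∀ n, s (n + 1) = (1 - α n) • r n + α n • K (s n))
    (hF : ∃ w ∈ W, K w = w) :
    Filter.Tendsto (fun n => ‖r n - K (s n)‖) Filter.atTop (nhds 0) := by
  obtain ⟨w, hwW, hKw⟩ := hF
  have hsW : ∀ n, s n ∈ W := fun n => by
    induction n with
    | zero => exact hs0
    | succ n ih =>
      have hrW : r n ∈ W := hr n ▸ hWconvex ih (hKmaps ih)
        (by linarith [hβ n]) (by linarith [hβ n]) (by ring)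
      exact hs n ▸ hWconvex hrW (hKmaps ih) (by linarith [hα n]) (by linarith [hα n]) (by ring)
  have hmann : Tendsto (fun n => ‖(s n - w) - (K (s n) - w)‖) atTop (𝓝 0) :=
    tendsto_norm_sub_of_eq_combo (lt_min ha (by nlinarith))
      (fun n => min_le_one_sub_mul_one_sub ha hb (hα n) (hβ n))
      (fun n => by simpa only [hKw] using hKnonexp _ (hsW n) _ hwW)
      (fun n => by rw [hs n, hr n]; module)
  simp only [sub_sub_sub_cancel_right] at hmann
  refine squeeze_zero (fun n => norm_nonneg _) (fun n => ?_) hmann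
  have hrK : r n - K (s n) = (1 - β n) • (s n - K (s n)) := by rw [hr n]; module
  rw [hrK, norm_smul_of_nonneg (by linarith [hβ n])]
  exact mul_le_of_le_one_left (norm_nonneg _) (by linarith [hβ n])

/-- in a uniformly convex Banach space, with `a ≤ α n ≤ b`, `a ≤ β n ≤ b`,
`0 < a ≤ b < 1`, and `F(K)` nonempty, one has `‖r n − K (s n)‖ → 0`. -/
theorem stmt_4
    {Z : Type*} [NormedAddCommGroup Z] [NormedSpace ℝ Z] [CompleteSpace Z]
    [UniformConvexSpace Z]
    (W : Set Z) (hWne : W.Nonempty) (hWclosed : IsClosed W) (hWconvex : Convex ℝ W)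
    (K : Z → Z) (hKmaps : Set.MapsTo K W W)
    (hKnonexp : ∀ x ∈ W, ∀ y ∈ W, ‖K x - K y‖ ≤ ‖x - y‖)
    (α β : ℕ → ℝ)
    (a b : ℝ) (ha : 0 < a) (hab : a ≤ b) (hb : b < 1)
    (hα : ∀ n, a ≤ α n ∧ α n ≤ b) (hβ : ∀ n, a ≤ β n ∧ β n ≤ b)
    (s r : ℕ → Z) (hs0 : s 0 ∈ W)
    (hr : ∀ n, r n = (1 - β n) • s n + β n • K (s n))
    (hs : ∀ n, s (n + 1) = (1 - α n) • r n + α n • K (s n))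
    (hF : ∃ w ∈ W, K w = w) :
    Filter.Tendsto (fun n => ‖r n - K (s n)‖) Filter.atTop (nhds 0) :=
  stmt_4_general W hWconvex K hKmaps hKnonexp α β a b ha hb hα hβ s r hs0 hr hs hF
end

section
/- Suppose Z is uniformly convex, there exist a, b with 0 < a ≤ b < 1 and a ≤ α_n ≤ b, a ≤ β_n ≤ b for all n, and w ∈ F(K). If lim_{n→∞} ‖s_n − w‖ = r, then also lim_{n→∞} ‖r_n − w‖ = r. -/
/-- in a uniformly convex Banach space, with `a ≤ α n ≤ b`, `a ≤ β n ≤ b`,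
`0 < a ≤ b < 1`, and `w ∈ F(K)`: if `‖s n − w‖ → r₀` then `‖r n − w‖ → r₀`. -/
theorem stmt_5
    {Z : Type*} [NormedAddCommGroup Z] [NormedSpace ℝ Z] [CompleteSpace Z]
    [UniformConvexSpace Z]
    (W : Set Z) (hWne : W.Nonempty) (hWclosed : IsClosed W) (hWconvex : Convex ℝ W)
    (K : Z → Z) (hKmaps : Set.MapsTo K W W)
    (hKnonexp : ∀ x ∈ W, ∀ y ∈ W, ‖K x - K y‖ ≤ ‖x - y‖)
    (α β : ℕ → ℝ)
    (a b : ℝ) (ha : 0 < a) (hab : a ≤ b) (hb : b < 1)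
    (hα : ∀ n, a ≤ α n ∧ α n ≤ b) (hβ : ∀ n, a ≤ β n ∧ β n ≤ b)
    (s r : ℕ → Z) (hs0 : s 0 ∈ W)
    (hr : ∀ n, r n = (1 - β n) • s n + β n • K (s n))
    (hs : ∀ n, s (n + 1) = (1 - α n) • r n + α n • K (s n))
    (w : Z) (hwW : w ∈ W) (hwfix : K w = w)
    (r₀ : ℝ) (hlim : Filter.Tendsto (fun n => ‖s n - w‖) Filter.atTop (nhds r₀)) :
    Filter.Tendsto (fun n => ‖r n - w‖) Filter.atTop (nhds r₀) := by
  have hmem : ∀ n, s n ∈ W := by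
    intro n
    induction n with
    | zero => exact hs0
    | succ n ih =>
      have hKs : K (s n) ∈ W := hKmaps ih
      have hrW : r n ∈ W := by
        rw [hr n]
        exact hWconvex ih hKs (by linarith [(hβ n).2]) (by linarith [(hβ n).1]) (by ring)
      rw [hs n]
      exact hWconvex hrW hKs (by linarith [(hα n).2]) (by linarith [(hα n).1]) (by ring)
  have hK : ∀ n, ‖K (s n) - w‖ ≤ ‖s n - w‖ := by
    intro n
    have := hKnonexp (s n) (hmem n) w hwW
    rwa [hwfix] at this
  have h1 : ∀ n, ‖r n - w‖ ≤ ‖s n - w‖ := by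
    intro n
    have heq : r n - w = (1 - β n) • (s n - w) + β n • (K (s n) - w) := by
      rw [hr n]; module
    calc ‖r n - w‖ = ‖(1 - β n) • (s n - w) + β n • (K (s n) - w)‖ := by rw [heq]
      _ ≤ (1 - β n) * ‖s n - w‖ + β n * ‖K (s n) - w‖ := by
          refine (norm_add_le _ _).trans ?_
          rw [norm_smul, norm_smul, Real.norm_of_nonneg (by linarith [(hβ n).2]),
            Real.norm_of_nonneg (by linarith [(hβ n).1])]
      _ ≤ ‖s n - w‖ := by nlinarith [(hβ n).1, hK n]
  have h2 : ∀ n, ‖s (n+1) - w‖ ≤ (1 - α n) * ‖r n - w‖ + α n * ‖s n - w‖ := by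
    intro n
    have heq : s (n+1) - w = (1 - α n) • (r n - w) + α n • (K (s n) - w) := by
      rw [hs n]; module
    calc ‖s (n+1) - w‖ = ‖(1 - α n) • (r n - w) + α n • (K (s n) - w)‖ := by rw [heq]
      _ ≤ (1 - α n) * ‖r n - w‖ + α n * ‖K (s n) - w‖ := by
          refine (norm_add_le _ _).trans ?_
          rw [norm_smul, norm_smul, Real.norm_of_nonneg (by linarith [(hα n).2]),
            Real.norm_of_nonneg (by linarith [(hα n).1])]
      _ ≤ (1 - α n) * ‖r n - w‖ + α n * ‖s n - w‖ := by
          nlinarith [(hα n).1, hK n]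
  have hbpos : (0:ℝ) < 1 - b := by linarith
  have hshift : Filter.Tendsto (fun n => ‖s (n+1) - w‖) Filter.atTop (nhds r₀) :=
    hlim.comp (Filter.tendsto_add_atTop_nat 1)
  have hupper : Filter.Tendsto (fun n => (‖s n - w‖ - ‖s (n+1) - w‖) / (1 - b))
      Filter.atTop (nhds 0) := by
    have := (hlim.sub hshift).div_const (1 - b)
    simpa using this
  have hdiff : Filter.Tendsto (fun n => ‖s n - w‖ - ‖r n - w‖) Filter.atTop (nhds 0) := by
    refine squeeze_zero (fun n => by linarith [h1 n]) (fun n => ?_) hupper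
    rw [le_div_iff₀ hbpos]
    nlinarith [h1 n, h2 n, (hα n).2]
  have := hlim.sub hdiff
  simpa using this
end

section
/- In a real inner product space, if w ∈ F(K) and β_n ∈ [a,b] with 0 < a ≤ b < 1, then for every n one has ‖s_n − K s_n‖² ≤ (1/(a(1 − b))) · (‖s_n − w‖² − ‖r_n − w‖²). -/
lemma combo_norm_sq {Z : Type*} [NormedAddCommGroup Z] [InnerProductSpace ℝ Z]
    (t : ℝ) (x y : Z) :
    ‖(1 - t) • x + t • y‖ ^ 2
      = (1 - t) * ‖x‖ ^ 2 + t * ‖y‖ ^ 2 - t * (1 - t) * ‖x - y‖ ^ 2 := by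
  simp only [← real_inner_self_eq_norm_sq, inner_add_left, inner_add_right,
    inner_sub_left, inner_sub_right, real_inner_smul_left, real_inner_smul_right,
    real_inner_comm x y]
  ring

/-- in a real inner product space, if `w ∈ F(K)` and `a ≤ β n ≤ b` with
`0 < a ≤ b < 1`, then `‖s n − K (s n)‖² ≤ (1/(a(1−b))) (‖s n − w‖² − ‖r n − w‖²)`. -/
theorem stmt_6
    {Z : Type*} [NormedAddCommGroup Z] [InnerProductSpace ℝ Z]
    (W : Set Z) (hWne : W.Nonempty) (hWclosed : IsClosed W) (hWconvex : Convex ℝ W)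
    (K : Z → Z) (hKmaps : Set.MapsTo K W W)
    (hKnonexp : ∀ x ∈ W, ∀ y ∈ W, ‖K x - K y‖ ≤ ‖x - y‖)
    (α β : ℕ → ℝ)
    (a b : ℝ) (ha : 0 < a) (hab : a ≤ b) (hb : b < 1)
    (hα : ∀ n, α n ∈ Set.Ioo (0 : ℝ) 1) (hβ : ∀ n, a ≤ β n ∧ β n ≤ b)
    (s r : ℕ → Z) (hs0 : s 0 ∈ W)
    (hr : ∀ n, r n = (1 - β n) • s n + β n • K (s n))
    (hs : ∀ n, s (n + 1) = (1 - α n) • r n + α n • K (s n))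
    (w : Z) (hwW : w ∈ W) (hwfix : K w = w) :
    ∀ n, ‖s n - K (s n)‖ ^ 2 ≤
      (1 / (a * (1 - b))) * (‖s n - w‖ ^ 2 - ‖r n - w‖ ^ 2) := by
  have hβ01 : ∀ n, 0 ≤ β n ∧ β n ≤ 1 := fun n =>
    ⟨le_trans ha.le (hβ n).1, le_trans (hβ n).2 hb.le⟩
  have hsW : ∀ n, s n ∈ W := by
    intro n
    induction n with
    | zero => exact hs0
    | succ n ih =>
      have hrW : r n ∈ W := by
        rw [hr n]
        exact hWconvex ih (hKmaps ih) (by linarith [(hβ01 n).2]) (hβ01 n).1 (by ring)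
      rw [hs n]
      exact hWconvex hrW (hKmaps ih) (by linarith [(hα n).2]) (hα n).1.le (by ring)
  intro n
  have hKle : ‖K (s n) - w‖ ^ 2 ≤ ‖s n - w‖ ^ 2 := by
    have := hKnonexp (s n) (hsW n) w hwW
    rw [hwfix] at this
    exact pow_le_pow_left₀ (norm_nonneg _) this 2
  have hrw : r n - w = (1 - β n) • (s n - w) + β n • (K (s n) - w) := by
    rw [hr n]; module
  have hid : ‖r n - w‖ ^ 2
      = (1 - β n) * ‖s n - w‖ ^ 2 + β n * ‖K (s n) - w‖ ^ 2
        - β n * (1 - β n) * ‖s n - w - (K (s n) - w)‖ ^ 2 := by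
    rw [hrw, combo_norm_sq]
  have hsub : s n - w - (K (s n) - w) = s n - K (s n) := by abel
  rw [hsub] at hid
  have key : β n * (1 - β n) * ‖s n - K (s n)‖ ^ 2 ≤ ‖s n - w‖ ^ 2 - ‖r n - w‖ ^ 2 := by
    nlinarith [(hβ01 n).1, (hβ01 n).2]
  have hcoef : a * (1 - b) ≤ β n * (1 - β n) := by
    nlinarith [(hβ n).1, (hβ n).2]
  have hpos : 0 < a * (1 - b) := by nlinarith
  rw [div_mul_eq_mul_div, one_mul, le_div_iff₀ hpos]
  nlinarith [sq_nonneg (‖s n - K (s n)‖)]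
end

section
/- (Theorem 3.2) Suppose Z is uniformly convex and F(K) is nonempty. Then the sequence (s_n) converges strongly (in norm) to a point of F(K) if and only if liminf_{n→∞} d(s_n, F(K)) = 0. -/
open Filter Metric

/-- Theorem 3.2: in a uniformly convex Banach space with `F(K)` nonempty,
`(s n)` converges strongly to a point of `F(K)` iff `liminf d(s n, F(K)) = 0`. -/
theorem stmt_9
    {Z : Type*} [NormedAddCommGroup Z] [NormedSpace ℝ Z] [CompleteSpace Z]
    [UniformConvexSpace Z]
    (W : Set Z) (hWne : W.Nonempty) (hWclosed : IsClosed W) (hWconvex : Convex ℝ W)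
    (K : Z → Z) (hKmaps : Set.MapsTo K W W)
    (hKnonexp : ∀ x ∈ W, ∀ y ∈ W, ‖K x - K y‖ ≤ ‖x - y‖)
    (α β : ℕ → ℝ)
    (hα : ∀ n, α n ∈ Set.Ioo (0 : ℝ) 1) (hβ : ∀ n, β n ∈ Set.Ioo (0 : ℝ) 1)
    (s r : ℕ → Z) (hs0 : s 0 ∈ W)
    (hr : ∀ n, r n = (1 - β n) • s n + β n • K (s n))
    (hs : ∀ n, s (n + 1) = (1 - α n) • r n + α n • K (s n))
    (hF : ∃ w ∈ W, K w = w) :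
    (∃ w, (w ∈ W ∧ K w = w) ∧ Filter.Tendsto s Filter.atTop (nhds w)) ↔
      Filter.liminf (fun n => Metric.infDist (s n) {z | z ∈ W ∧ K z = z})
        Filter.atTop = 0 := by
  set F : Set Z := {z | z ∈ W ∧ K z = z} with hFdef
  obtain ⟨w0, hw0W, hw0K⟩ := hF
  have hFne : F.Nonempty := ⟨w0, hw0W, hw0K⟩
  -- membership of the iterates in W
  have hsW : ∀ n, s n ∈ W := by
    intro n
    induction n with
    | zero => exact hs0
    | succ n ih =>
      have hK : K (s n) ∈ W := hKmaps ih
      have hrW : r n ∈ W := by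
        rw [hr n]
        exact hWconvex ih hK (by linarith [(hβ n).2]) (le_of_lt (hβ n).1) (by ring)
      rw [hs n]
      exact hWconvex hrW hK (by linarith [(hα n).2]) (le_of_lt (hα n).1) (by ring)
  -- Fejér monotonicity
  have hFejer : ∀ w ∈ F, ∀ n, ‖s (n + 1) - w‖ ≤ ‖s n - w‖ := by
    intro w hw n
    obtain ⟨hwW, hwK⟩ := hw
    have hKle : ‖K (s n) - w‖ ≤ ‖s n - w‖ := by
      calc ‖K (s n) - w‖ = ‖K (s n) - K w‖ := by rw [hwK]
        _ ≤ ‖s n - w‖ := hKnonexp _ (hsW n) _ hwW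
    have hrle : ‖r n - w‖ ≤ ‖s n - w‖ := by
      have heq : r n - w = (1 - β n) • (s n - w) + β n • (K (s n) - w) := by
        rw [hr n]; module
      rw [heq]
      calc ‖(1 - β n) • (s n - w) + β n • (K (s n) - w)‖
          ≤ ‖(1 - β n) • (s n - w)‖ + ‖β n • (K (s n) - w)‖ := norm_add_le _ _
        _ = (1 - β n) * ‖s n - w‖ + β n * ‖K (s n) - w‖ := by
            rw [norm_smul, norm_smul, Real.norm_of_nonneg (by linarith [(hβ n).2]),
              Real.norm_of_nonneg (le_of_lt (hβ n).1)]
        _ ≤ (1 - β n) * ‖s n - w‖ + β n * ‖s n - w‖ := by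
            nlinarith [(hβ n).1]
        _ = ‖s n - w‖ := by ring
    have heq : s (n + 1) - w = (1 - α n) • (r n - w) + α n • (K (s n) - w) := by
      rw [hs n]; module
    rw [heq]
    calc ‖(1 - α n) • (r n - w) + α n • (K (s n) - w)‖
        ≤ ‖(1 - α n) • (r n - w)‖ + ‖α n • (K (s n) - w)‖ := norm_add_le _ _
      _ = (1 - α n) * ‖r n - w‖ + α n * ‖K (s n) - w‖ := by
          rw [norm_smul, norm_smul, Real.norm_of_nonneg (by linarith [(hα n).2]),
            Real.norm_of_nonneg (le_of_lt (hα n).1)]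
      _ ≤ (1 - α n) * ‖s n - w‖ + α n * ‖s n - w‖ := by
          have h1 : (0:ℝ) ≤ 1 - α n := by linarith [(hα n).2]
          have h2 : (0:ℝ) ≤ α n := le_of_lt (hα n).1
          nlinarith
      _ = ‖s n - w‖ := by ring
  have hFejerD : ∀ w ∈ F, Antitone fun n => dist (s n) w := by
    intro w hw
    apply antitone_nat_of_succ_le
    intro n
    simpa [dist_eq_norm] using hFejer w hw n
  -- the distance to F is antitone
  set d : ℕ → ℝ := fun n => infDist (s n) F with hddef
  have hdanti : Antitone d := by
    apply antitone_nat_of_succ_le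
    intro n
    apply le_of_forall_pos_le_add
    intro ε hε
    have hlt : infDist (s n) F < infDist (s n) F + ε := by linarith
    obtain ⟨w, hwF, hwd⟩ := (infDist_lt_iff hFne).mp hlt
    calc d (n + 1) ≤ dist (s (n + 1)) w := infDist_le_dist_of_mem hwF
      _ ≤ dist (s n) w := by simpa [dist_eq_norm] using hFejer w hwF n
      _ ≤ d n + ε := le_of_lt hwd
  have hdnonneg : ∀ n, 0 ≤ d n := fun n => infDist_nonneg
  -- F is closed
  have hFclosed : IsClosed F := by
    apply IsSeqClosed.isClosed
    intro x z hx hz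
    have hzW : z ∈ W := hWclosed.isSeqClosed (fun n => (hx n).1) hz
    refine ⟨hzW, ?_⟩
    have hb : ∀ n, dist (K z) z ≤ 2 * dist z (x n) := by
      intro n
      have h1 : ‖K z - K (x n)‖ ≤ ‖z - x n‖ := hKnonexp _ hzW _ (hx n).1
      calc dist (K z) z ≤ dist (K z) (x n) + dist (x n) z := dist_triangle _ _ _
        _ = ‖K z - K (x n)‖ + dist (x n) z := by rw [dist_eq_norm, (hx n).2]
        _ ≤ ‖z - x n‖ + dist (x n) z := by linarith
        _ = 2 * dist z (x n) := by
            rw [← dist_eq_norm, dist_comm (x n) z]; ring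
    have hlim : Tendsto (fun n => 2 * dist z (x n)) atTop (nhds 0) := by
      have : Tendsto (fun n => dist z (x n)) atTop (nhds 0) := by
        simpa [dist_comm] using tendsto_iff_dist_tendsto_zero.mp hz
      simpa using this.const_mul 2
    have h0 : dist (K z) z ≤ 0 := ge_of_tendsto' hlim hb
    have : dist (K z) z = 0 := le_antisymm h0 dist_nonneg
    exact eq_of_dist_eq_zero this
  constructor
  · -- forward
    rintro ⟨w, hwF, hws⟩
    have hdist : Tendsto (fun n => dist (s n) w) atTop (nhds 0) := by
      simpa using tendsto_iff_dist_tendsto_zero.mp hws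
    have htd : Tendsto d atTop (nhds 0) := by
      apply squeeze_zero hdnonneg (fun n => infDist_le_dist_of_mem hwF) hdist
    exact htd.liminf_eq
  · -- backward
    intro hlim0
    have hbdd : BddBelow (Set.range d) := ⟨0, by rintro _ ⟨n, rfl⟩; exact hdnonneg n⟩
    have htd : Tendsto d atTop (nhds (⨅ n, d n)) := tendsto_atTop_ciInf hdanti hbdd
    have hinf0 : (⨅ n, d n) = 0 := by rw [← htd.liminf_eq]; exact hlim0
    rw [hinf0] at htd
    -- Cauchy
    have hcauchy : CauchySeq s := by
      rw [Metric.cauchySeq_iff']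
      intro ε hε
      have : ∀ᶠ n in atTop, d n < ε / 2 :=
        htd.eventually (eventually_lt_nhds (by linarith))
      obtain ⟨N, hN⟩ := this.exists
      obtain ⟨w, hwF, hwd⟩ := (infDist_lt_iff hFne).mp hN
      refine ⟨N, fun n hn => ?_⟩
      calc dist (s n) (s N) ≤ dist (s n) w + dist w (s N) := dist_triangle _ _ _
        _ = dist (s n) w + dist (s N) w := by rw [dist_comm w]
        _ ≤ dist (s N) w + dist (s N) w := by
            have := hFejerD w hwF hn
            linarith
        _ < ε := by linarith
    obtain ⟨z, hz⟩ := cauchySeq_tendsto_of_complete hcauchy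
    have hzF : z ∈ F := by
      rw [hFclosed.mem_iff_infDist_zero hFne]
      have hle : ∀ n, infDist z F ≤ d n + dist z (s n) := fun n =>
        infDist_le_infDist_add_dist
      have hrhs : Tendsto (fun n => d n + dist z (s n)) atTop (nhds 0) := by
        have h1 : Tendsto (fun n => dist z (s n)) atTop (nhds 0) := by
          simpa [dist_comm] using tendsto_iff_dist_tendsto_zero.mp hz
        simpa using htd.add h1
      have h0 : infDist z F ≤ 0 := ge_of_tendsto' hrhs hle
      exact le_antisymm h0 infDist_nonneg
    exact ⟨z, hzF, hz⟩
end

section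
/- (Theorem 3.3) Suppose Z is uniformly convex, there exist a, b with 0 < a ≤ b < 1 and a ≤ α_n ≤ b, a ≤ β_n ≤ b for all n, F(K) is nonempty, and K satisfies Condition (I). Then the sequence (s_n) converges strongly (in norm) to a fixed point of K. -/
open Filter Metric

/-- Convex-combination form of uniform convexity: for `t ∈ [0,1]` and unit-ball
vectors `x, y` with `ε ≤ ‖x - y‖`, the combination `(1-t)•x + t•y` has norm at most
`1 - min t (1-t) * δ`. -/
lemma uc_combo {Z : Type*} [NormedAddCommGroup Z] [NormedSpace ℝ Z] [UniformConvexSpace Z]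
    {ε : ℝ} (hε : 0 < ε) :
    ∃ δ > 0, δ ≤ 2 ∧ ∀ t : ℝ, 0 ≤ t → t ≤ 1 → ∀ x y : Z, ‖x‖ ≤ 1 → ‖y‖ ≤ 1 →
      ε ≤ ‖x - y‖ → ‖(1 - t) • x + t • y‖ ≤ 1 - min t (1 - t) * δ := by
  obtain ⟨δ, hδ, h⟩ := exists_forall_closed_ball_dist_add_le_two_sub Z hε
  refine ⟨min δ 2, lt_min hδ two_pos, min_le_right _ _, fun t ht0 ht1 x y hx hy hxy => ?_⟩
  have hxy' : ‖x + y‖ ≤ 2 - min δ 2 := (h hx hy hxy).trans (by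
    have := min_le_left δ 2; linarith)
  rcases le_total t (1/2) with htc | htc
  · have e : (1 - t) • x + t • y = t • (x + y) + (1 - 2*t) • x := by module
    rw [e, min_eq_left (by linarith)]
    have h2 := norm_add_le (t • (x + y)) ((1 - 2*t) • x)
    rw [norm_smul, norm_smul, Real.norm_eq_abs, Real.norm_eq_abs] at h2
    rw [abs_of_nonneg ht0, abs_of_nonneg (by linarith : (0:ℝ) ≤ 1 - 2*t)] at h2
    nlinarith [norm_nonneg (x + y), norm_nonneg x]
  · have e : (1 - t) • x + t • y = (1 - t) • (x + y) + (2*t - 1) • y := by module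
    rw [e, min_eq_right (by linarith)]
    have h2 := norm_add_le ((1 - t) • (x + y)) ((2*t - 1) • y)
    rw [norm_smul, norm_smul, Real.norm_eq_abs, Real.norm_eq_abs] at h2
    rw [abs_of_nonneg (by linarith : (0:ℝ) ≤ 1 - t),
      abs_of_nonneg (by linarith : (0:ℝ) ≤ 2*t - 1)] at h2
    nlinarith [norm_nonneg (x + y), norm_nonneg y]

/-- norm of a convex combination. -/
lemma combo_norm_le {Z : Type*} [NormedAddCommGroup Z] [NormedSpace ℝ Z]
    {t : ℝ} (ht0 : 0 ≤ t) (ht1 : t ≤ 1) (x y : Z) :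
    ‖(1 - t) • x + t • y‖ ≤ (1 - t) * ‖x‖ + t * ‖y‖ := by
  have h := norm_add_le ((1 - t) • x) (t • y)
  simpa [norm_smul, abs_of_nonneg ht0, abs_of_nonneg (by linarith : (0:ℝ) ≤ 1 - t)] using h

/-- Theorem 3.3: in a uniformly convex Banach space, with
`a ≤ α n ≤ b`, `a ≤ β n ≤ b`, `0 < a ≤ b < 1`, `F(K)` nonempty, and `K` satisfying
Condition (I), the sequence `(s n)` converges strongly to a fixed point of `K`. -/
theorem stmt_10
    {Z : Type*} [NormedAddCommGroup Z] [NormedSpace ℝ Z] [CompleteSpace Z]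
    [UniformConvexSpace Z]
    (W : Set Z) (hWne : W.Nonempty) (hWclosed : IsClosed W) (hWconvex : Convex ℝ W)
    (K : Z → Z) (hKmaps : Set.MapsTo K W W)
    (hKnonexp : ∀ x ∈ W, ∀ y ∈ W, ‖K x - K y‖ ≤ ‖x - y‖)
    (α β : ℕ → ℝ)
    (a b : ℝ) (ha : 0 < a) (hab : a ≤ b) (hb : b < 1)
    (hα : ∀ n, a ≤ α n ∧ α n ≤ b) (hβ : ∀ n, a ≤ β n ∧ β n ≤ b)
    (s r : ℕ → Z) (hs0 : s 0 ∈ W)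
    (hr : ∀ n, r n = (1 - β n) • s n + β n • K (s n))
    (hs : ∀ n, s (n + 1) = (1 - α n) • r n + α n • K (s n))
    (hF : ∃ w ∈ W, K w = w)
    -- Condition (I):
    (m : ℝ → ℝ) (hm0 : m 0 = 0) (hmpos : ∀ t : ℝ, 0 < t → 0 < m t)
    (hmmono : ∀ x y : ℝ, 0 ≤ x → x ≤ y → m x ≤ m y)
    (hCondI : ∀ x ∈ W,
      m (Metric.infDist x {z | z ∈ W ∧ K z = z}) ≤ ‖x - K x‖) :
    ∃ w, (w ∈ W ∧ K w = w) ∧ Filter.Tendsto s Filter.atTop (nhds w) := by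
  obtain ⟨p, hpW, hpfix⟩ := hF
  -- membership
  have hsW : ∀ n, s n ∈ W := by
    intro n
    induction n with
    | zero => exact hs0
    | succ n ih =>
      have hKW : K (s n) ∈ W := hKmaps ih
      have hrW : r n ∈ W := by
        rw [hr n]
        exact hWconvex ih hKW (by linarith [(hβ n).2]) (by linarith [(hβ n).1]) (by ring)
      rw [hs n]
      exact hWconvex hrW hKW (by linarith [(hα n).2]) (by linarith [(hα n).1]) (by ring)
  -- one-step Fejér monotonicity for any fixed point q
  have key : ∀ q, q ∈ W → K q = q → ∀ n,
      ‖r n - q‖ ≤ ‖s n - q‖ ∧ ‖s (n + 1) - q‖ ≤ ‖s n - q‖ := by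
    intro q hqW hq n
    have hKs : ‖K (s n) - q‖ ≤ ‖s n - q‖ := by
      calc ‖K (s n) - q‖ = ‖K (s n) - K q‖ := by rw [hq]
        _ ≤ ‖s n - q‖ := hKnonexp _ (hsW n) _ hqW
    have h1 : ‖r n - q‖ ≤ ‖s n - q‖ := by
      have e : r n - q = (1 - β n) • (s n - q) + β n • (K (s n) - q) := by rw [hr n]; module
      rw [e]
      refine (combo_norm_le (t := β n) (by linarith [(hβ n).1]) (by linarith [(hβ n).2]) _ _).trans ?_
      nlinarith [(hβ n).1, (hβ n).2, norm_nonneg (s n - q)]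
    have e2 : s (n + 1) - q = (1 - α n) • (r n - q) + α n • (K (s n) - q) := by
      rw [hs n]; module
    refine ⟨h1, ?_⟩
    rw [e2]
    refine (combo_norm_le (t := α n) (by linarith [(hα n).1]) (by linarith [(hα n).2]) _ _).trans ?_
    nlinarith [(hα n).1, (hα n).2, norm_nonneg (s n - q), h1]
  have dante : ∀ q, q ∈ W → K q = q → ∀ i j, i ≤ j → ‖s j - q‖ ≤ ‖s i - q‖ := by
    intro q hqW hq
    exact fun i j h =>
      antitone_nat_of_succ_le (f := fun n => ‖s n - q‖) (fun n => (key q hqW hq n).2) h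
  -- The gap ‖s n - K (s n)‖ tends to 0.
  have gap0 : Tendsto (fun n => ‖s n - K (s n)‖) atTop (nhds 0) := by
    rw [Metric.tendsto_atTop]
    intro ε hε
    by_contra hcon
    push_neg at hcon
    have hfreq : ∃ᶠ n in atTop, ε ≤ ‖s n - K (s n)‖ := by
      rw [Filter.frequently_atTop]
      intro N
      obtain ⟨n, hn, h⟩ := hcon N
      refine ⟨n, hn, ?_⟩
      rwa [Real.dist_eq, sub_zero, abs_of_nonneg (norm_nonneg _)] at h
    set D0 : ℝ := ‖s 0 - p‖ with hD0
    have hε' : 0 < ε / (D0 + 1) := div_pos hε (by positivity)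
    obtain ⟨δ, hδ, hδ2, hcombo⟩ := uc_combo (Z := Z) hε'
    set μ : ℝ := min a (1 - b) with hμdef
    have hμ : 0 < μ := lt_min ha (by linarith)
    set γ : ℝ := (1 - b) * (ε / 2) * μ * δ with hγdef
    have hγ : 0 < γ := mul_pos (mul_pos (mul_pos (by linarith) (by linarith)) hμ) hδ
    -- bad step: if the gap is ≥ ε then the distance to p drops by γ
    have badstep : ∀ n, ε ≤ ‖s n - K (s n)‖ → ‖s (n + 1) - p‖ ≤ ‖s n - p‖ - γ := by
      intro n hbad
      set D : ℝ := ‖s n - p‖ with hD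
      have hKs : ‖K (s n) - p‖ ≤ D := by
        calc ‖K (s n) - p‖ = ‖K (s n) - K p‖ := by rw [hpfix]
          _ ≤ ‖s n - p‖ := hKnonexp _ (hsW n) _ hpW
      have hgap2 : ε ≤ 2 * D := by
        have e : s n - K (s n) = (s n - p) - (K (s n) - p) := by abel
        have := norm_sub_le (s n - p) (K (s n) - p)
        rw [← e] at this
        linarith
      have hDpos : 0 < D := by linarith
      have hDle : D ≤ D0 := dante p hpW hpfix 0 n (Nat.zero_le n)
      set x' : Z := D⁻¹ • (s n - p) with hx'def
      set y' : Z := D⁻¹ • (K (s n) - p) with hy'def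
      have hx' : ‖x'‖ ≤ 1 := by
        rw [hx'def, norm_smul, norm_inv, Real.norm_eq_abs, abs_of_pos hDpos, ← hD,
          inv_mul_cancel₀ hDpos.ne']
      have hy' : ‖y'‖ ≤ 1 := by
        rw [hy'def, norm_smul, norm_inv, Real.norm_eq_abs, abs_of_pos hDpos]
        rw [inv_mul_le_iff₀ hDpos, mul_one]
        exact hKs
      have hxy' : ε / (D0 + 1) ≤ ‖x' - y'‖ := by
        have e : x' - y' = D⁻¹ • (s n - K (s n)) := by
          rw [hx'def, hy'def, ← smul_sub]
          congr 1
          abel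
        rw [e, norm_smul, norm_inv, Real.norm_eq_abs, abs_of_pos hDpos, inv_mul_eq_div]
        exact div_le_div₀ (norm_nonneg _) hbad hDpos (by linarith)
      have hcb := hcombo (β n) (by linarith [(hβ n).1]) (by linarith [(hβ n).2]) x' y' hx' hy' hxy'
      have hμle : μ ≤ min (β n) (1 - β n) :=
        le_min ((min_le_left _ _).trans (hβ n).1)
          ((min_le_right _ _).trans (by linarith [(hβ n).2]))
      have hDx : D • x' = s n - p := by
        rw [hx'def, smul_smul, mul_inv_cancel₀ hDpos.ne', one_smul]
      have hDy : D • y' = K (s n) - p := by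
        rw [hy'def, smul_smul, mul_inv_cancel₀ hDpos.ne', one_smul]
      have hrp : ‖r n - p‖ ≤ D - (ε / 2) * μ * δ := by
        have e : r n - p = D • ((1 - β n) • x' + β n • y') := by
          rw [smul_add, smul_comm D (1 - β n), smul_comm D (β n), hDx, hDy, hr n]
          module
        rw [e, norm_smul, Real.norm_eq_abs, abs_of_pos hDpos]
        have h4 : D * ‖(1 - β n) • x' + β n • y'‖ ≤ D * (1 - min (β n) (1 - β n) * δ) :=
          mul_le_mul_of_nonneg_left hcb hDpos.le
        have hmin0 : 0 ≤ min (β n) (1 - β n) * δ := mul_nonneg (hμ.le.trans hμle) hδ.le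
        have h5 : (ε / 2) * (μ * δ) ≤ D * (min (β n) (1 - β n) * δ) := by
          have hmd : μ * δ ≤ min (β n) (1 - β n) * δ := mul_le_mul_of_nonneg_right hμle hδ.le
          calc (ε / 2) * (μ * δ) ≤ (ε / 2) * (min (β n) (1 - β n) * δ) :=
                mul_le_mul_of_nonneg_left hmd (by linarith)
            _ ≤ D * (min (β n) (1 - β n) * δ) :=
                mul_le_mul_of_nonneg_right (by linarith) hmin0
        have h6 : D * (1 - min (β n) (1 - β n) * δ) = D - D * (min (β n) (1 - β n) * δ) := by
          ring
        linarith
      have e2 : s (n + 1) - p = (1 - α n) • (r n - p) + α n • (K (s n) - p) := by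
        rw [hs n]; module
      rw [e2]
      refine (combo_norm_le (by linarith [(hα n).1]) (by linarith [(hα n).2]) _ _).trans ?_
      have hεμδ : 0 ≤ (ε / 2) * μ * δ := by positivity
      rw [hγdef]
      nlinarith [(hα n).1, (hα n).2]
    obtain ⟨φ, hφmono, hφbad⟩ := Filter.extraction_of_frequently_atTop hfreq
    have hdrop : ∀ k : ℕ, ‖s (φ k) - p‖ ≤ D0 - k * γ := by
      intro k
      induction k with
      | zero => simpa using dante p hpW hpfix 0 (φ 0) (Nat.zero_le _)
      | succ k ih =>
        have h1 : ‖s (φ k + 1) - p‖ ≤ ‖s (φ k) - p‖ - γ := badstep _ (hφbad k)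
        have h2 : ‖s (φ (k + 1)) - p‖ ≤ ‖s (φ k + 1) - p‖ :=
          dante p hpW hpfix (φ k + 1) (φ (k + 1)) (hφmono (Nat.lt_succ_self k))
        push_cast
        linarith
    obtain ⟨k, hk⟩ := exists_nat_gt (D0 / γ)
    have h1 := hdrop k
    have h2 : D0 < k * γ := by rwa [div_lt_iff₀ hγ] at hk
    linarith [norm_nonneg (s (φ k) - p)]
  -- distance to the fixed-point set tends to 0
  set F : Set Z := {z | z ∈ W ∧ K z = z} with hFdef
  have hFne : F.Nonempty := ⟨p, hpW, hpfix⟩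
  have dF0 : Tendsto (fun n => Metric.infDist (s n) F) atTop (nhds 0) := by
    rw [Metric.tendsto_atTop]
    intro ε hε
    obtain ⟨N, hN⟩ := (Metric.tendsto_atTop.1 gap0) (m ε) (hmpos ε hε)
    refine ⟨N, fun n hn => ?_⟩
    rw [Real.dist_eq, sub_zero, abs_of_nonneg Metric.infDist_nonneg]
    by_contra hcon
    push_neg at hcon
    have h1 := hCondI (s n) (hsW n)
    have h2 := hmmono ε _ hε.le hcon
    have h3 := hN n hn
    rw [Real.dist_eq, sub_zero, abs_of_nonneg (norm_nonneg _)] at h3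
    linarith
  -- Cauchy
  have hc : CauchySeq s := by
    rw [Metric.cauchySeq_iff]
    intro ε hε
    obtain ⟨N, hN⟩ := (Metric.tendsto_atTop.1 dF0) (ε / 3) (by linarith)
    have hdN : Metric.infDist (s N) F < ε / 3 := by
      have := hN N le_rfl
      rwa [Real.dist_eq, sub_zero, abs_of_nonneg Metric.infDist_nonneg] at this
    obtain ⟨q, hqF, hq⟩ := (Metric.infDist_lt_iff hFne).1 hdN
    refine ⟨N, fun i hi j hj => ?_⟩
    have hiq : dist (s i) q ≤ dist (s N) q := by
      rw [dist_eq_norm, dist_eq_norm]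
      exact dante q hqF.1 hqF.2 N i hi
    have hjq : dist (s j) q ≤ dist (s N) q := by
      rw [dist_eq_norm, dist_eq_norm]
      exact dante q hqF.1 hqF.2 N j hj
    calc dist (s i) (s j) ≤ dist (s i) q + dist q (s j) := dist_triangle _ _ _
      _ = dist (s i) q + dist (s j) q := by rw [dist_comm q]
      _ < ε := by linarith
  obtain ⟨w, hw⟩ := cauchySeq_tendsto_of_complete hc
  have hwW : w ∈ W := hWclosed.mem_of_tendsto hw (Filter.Eventually.of_forall hsW)
  have hbnd : ∀ n, ‖w - K w‖ ≤ 2 * ‖s n - w‖ + ‖s n - K (s n)‖ := by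
    intro n
    have e : w - K w = -(s n - w) + (s n - K (s n)) + (K (s n) - K w) := by abel
    calc ‖w - K w‖ ≤ ‖-(s n - w)‖ + ‖s n - K (s n)‖ + ‖K (s n) - K w‖ := by
          rw [e]; exact norm_add₃_le
      _ ≤ ‖s n - w‖ + ‖s n - K (s n)‖ + ‖s n - w‖ := by
          rw [norm_neg]
          gcongr
          exact hKnonexp _ (hsW n) _ hwW
      _ = 2 * ‖s n - w‖ + ‖s n - K (s n)‖ := by ring
  have h1 : Tendsto (fun n => ‖s n - w‖) atTop (nhds 0) :=
    tendsto_iff_norm_sub_tendsto_zero.1 hw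
  have hlim : Tendsto (fun n => 2 * ‖s n - w‖ + ‖s n - K (s n)‖) atTop (nhds 0) := by
    have := (h1.const_mul 2).add gap0
    simpa using this
  have hle : ‖w - K w‖ ≤ 0 := ge_of_tendsto' hlim hbnd
  have hfix : K w = w := by
    have h0 : ‖w - K w‖ = 0 := le_antisymm hle (norm_nonneg _)
    have := norm_eq_zero.1 h0
    have := sub_eq_zero.1 this
    exact this.symm
  exact ⟨w, ⟨hwW, hfix⟩, hw⟩
end
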